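/- arXiv:2203.01615 — 3 statements merged into one kernel-verified Lean document; each statement's English description precedes it below -/
import Mathlib

section
/- Local-to-nonlocal estimate for the kinetic weight, compactly supported version: let g > 0, E_e ∈ ℝ, and E, B : ℝ×ℝ³ → ℝ³, and define the kinetic weight α as in the context. Fix (t,x) with x₃ > 0 and suppose g − E_e − E₃(t,x₁,x₂,0) − (v̂ × B(t,x₁,x₂,0))₃ ≥ 0 for all v ∈ ℝ³. Then for every M ≥ 1 there is a constant C(M) > 0, depending only on M, such that ∫_{{v ∈ ℝ³ : |v| ≤ M}} α(t,x,v)^{−1} dv ≤ C(M) · ln(1 + 1/x₃). -/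
open MeasureTheory Set

noncomputable section

/-- Physical space `ℝ³`, realized as functions `Fin 3 → ℝ`. -/
abbrev V3 : Type := Fin 3 → ℝ

/-- Euclidean inner product on `ℝ³`. -/
def dot3 (a b : V3) : ℝ := a 0 * b 0 + a 1 * b 1 + a 2 * b 2

/-- Euclidean norm on `ℝ³`. -/
def enorm3 (a : V3) : ℝ := Real.sqrt (dot3 a a)

/-- Cross product on `ℝ³`. -/
def cross3 (a b : V3) : V3 :=
  ![a 1 * b 2 - a 2 * b 1, a 2 * b 0 - a 0 * b 2, a 0 * b 1 - a 1 * b 0]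

/-- `⟨v⟩ = √(1 + |v|²)`. -/
def jap (v : V3) : ℝ := Real.sqrt (1 + dot3 v v)

/-- Relativistic velocity `v̂ = v / ⟨v⟩`. -/
def vhat (v : V3) : V3 := (jap v)⁻¹ • v

/-- The open upper half space `Ω = {x ∈ ℝ³ : x₃ > 0}`. -/
def halfSpace : Set V3 := {x : V3 | 0 < x 2}

/-- Embedding of the boundary `∂Ω ≃ ℝ²` into `ℝ³`. -/
def bdryPt (y : ℝ × ℝ) : V3 := ![y.1, y.2, 0]

/-- Projection `(x₁,x₂,x₃) ↦ (x₁,x₂,0)` onto the boundary. -/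
def proj0 (x : V3) : V3 := ![x 0, x 1, 0]

/-- Reflection `x̄ = (x₁,x₂,−x₃)`. -/
def refl3 (x : V3) : V3 := ![x 0, x 1, -(x 2)]

/-- Time derivative `∂ₜ` of a space-time function. -/
def pdt (f : ℝ × V3 → ℝ) : ℝ × V3 → ℝ := fun q => fderiv ℝ f q (1, 0)

/-- Spatial partial derivative `∂_{xᵢ}` of a space-time function. -/
def pdx (i : Fin 3) (f : ℝ × V3 → ℝ) : ℝ × V3 → ℝ := fun q => fderiv ℝ f q (0, Pi.single i 1)

/-- Partial derivative `∂_{xᵢ}` of a function on `ℝ³`. -/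
def sdx (i : Fin 3) (u : V3 → ℝ) : V3 → ℝ := fun x => fderiv ℝ u x (Pi.single i 1)

/-- `i`-th component of a space-time vector field. -/
def comp3 (F : ℝ × V3 → V3) (i : Fin 3) : ℝ × V3 → ℝ := fun q => F q i

/-- Spatial divergence of a space-time vector field. -/
def divX (F : ℝ × V3 → V3) (q : ℝ × V3) : ℝ := ∑ i : Fin 3, pdx i (comp3 F i) q

/-- Spatial curl of a space-time vector field. -/
def curlX (F : ℝ × V3 → V3) (q : ℝ × V3) : V3 :=
  ![pdx 1 (comp3 F 2) q - pdx 2 (comp3 F 1) q,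
    pdx 2 (comp3 F 0) q - pdx 0 (comp3 F 2) q,
    pdx 0 (comp3 F 1) q - pdx 1 (comp3 F 0) q]

/-- Curl of a vector field on `ℝ³`. -/
def curlS (F : V3 → V3) (x : V3) : V3 :=
  ![sdx 1 (fun z => F z 2) x - sdx 2 (fun z => F z 1) x,
    sdx 2 (fun z => F z 0) x - sdx 0 (fun z => F z 2) x,
    sdx 0 (fun z => F z 1) x - sdx 1 (fun z => F z 0) x]

/-- Divergence of a vector field on `ℝ³`. -/
def divS (F : V3 → V3) (x : V3) : ℝ := ∑ i : Fin 3, sdx i (fun z => F z i) x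

/-- Spatial Laplacian of a space-time function. -/
def lapST (f : ℝ × V3 → ℝ) (q : ℝ × V3) : ℝ := ∑ i : Fin 3, pdx i (pdx i f) q

/-- Laplacian of a function on `ℝ³`. -/
def lapS (u : V3 → ℝ) (x : V3) : ℝ := ∑ i : Fin 3, sdx i (sdx i u) x

/-- Open space-time domain `(0,T) × Ω`. -/
def stDom (T : ℝ) : Set (ℝ × V3) := Ioo (0 : ℝ) T ×ˢ halfSpace

/-- Closed space-time domain `[0,T] × Ω̄`. -/
def stDomCl (T : ℝ) : Set (ℝ × V3) := Icc (0 : ℝ) T ×ˢ closure halfSpace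

/-- Lateral boundary domain `(0,T) × ∂Ω`, with `∂Ω ≃ ℝ²`. -/
def bDom (T : ℝ) : Set (ℝ × (ℝ × ℝ)) := Ioo (0 : ℝ) T ×ˢ (univ : Set (ℝ × ℝ))

/-- The third standard basis vector `e₃`. -/
def e3v : V3 := ![0, 0, 1]

/-- The Lorentz force `𝔉(t,x,v) = E + E_e e₃ + v̂ × (B + B_e e₃) − g e₃`. -/
def lorentz (E B : ℝ × V3 → V3) (Ee Be g : ℝ) (t : ℝ) (x v : V3) : V3 :=
  E (t, x) + Ee • e3v + cross3 (vhat v) (B (t, x) + Be • e3v) - g • e3v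

/-- The kinetic weight
`α(t,x,v) = √( x₃² + v̂₃² + 2(g − E_e − E₃(t,x₁,x₂,0) − (v̂ × B(t,x₁,x₂,0))₃) x₃/⟨v⟩ )`. -/
def kinWeight (E B : ℝ × V3 → V3) (Ee g : ℝ) (t : ℝ) (x v : V3) : ℝ :=
  Real.sqrt ((x 2) ^ 2 + (vhat v 2) ^ 2
    + 2 * (g - Ee - E (t, proj0 x) 2 - cross3 (vhat v) (B (t, proj0 x)) 2) * x 2 / jap v)


lemma oneD_bound (c a M : ℝ) (hc : 1 ≤ c) (ha : 0 < a) (hM : 1 ≤ M) :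
    ∫⁻ s in Icc (-M) M, ENNReal.ofReal (2 * c / (a + |s|))
      ≤ ENNReal.ofReal (4 * c * M * Real.log (1 + 1 / a)) := by
  have hc0 : (0:ℝ) < c := by linarith
  have hM0 : (0:ℝ) < M := by linarith
  have hcont : Continuous fun s : ℝ => 2 * c / (a + |s|) :=
    continuous_const.div (continuous_const.add continuous_abs)
      (fun s => by positivity)
  have hint : IntegrableOn (fun s : ℝ => 2 * c / (a + |s|)) (Icc (-M) M) :=
    hcont.integrableOn_Icc
  have hnn : 0 ≤ᶠ[ae (volume.restrict (Icc (-M) M))] fun s : ℝ => 2 * c / (a + |s|) :=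
    Filter.Eventually.of_forall fun s => by positivity
  rw [← MeasureTheory.ofReal_integral_eq_lintegral_ofReal hint hnn]
  apply ENNReal.ofReal_le_ofReal
  have h1 : ∫ s in Icc (-M) M, 2 * c / (a + |s|) = ∫ s in (-M)..M, 2 * c / (a + |s|) := by
    rw [intervalIntegral.integral_of_le (by linarith : -M ≤ M),
      MeasureTheory.integral_Icc_eq_integral_Ioc]
  have hii : ∀ u w : ℝ, IntervalIntegrable (fun s : ℝ => 2 * c / (a + |s|)) volume u w :=
    fun u w => hcont.intervalIntegrable u w
  have hsplit : ∫ s in (-M)..M, 2 * c / (a + |s|)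
      = (∫ s in (-M)..(0:ℝ), 2 * c / (a + |s|)) + ∫ s in (0:ℝ)..M, 2 * c / (a + |s|) :=
    (intervalIntegral.integral_add_adjacent_intervals (hii _ _) (hii _ _)).symm
  have hneg : ∫ s in (-M)..(0:ℝ), 2 * c / (a + |s|) = ∫ s in (0:ℝ)..M, 2 * c / (a + |s|) := by
    have := intervalIntegral.integral_comp_neg (a := 0) (b := M) (fun s : ℝ => 2 * c / (a + |s|))
    simp only [abs_neg, neg_zero] at this
    rw [← this]
  have hpos : ∫ s in (0:ℝ)..M, 2 * c / (a + |s|) = 2 * c * Real.log ((a + M) / a) := by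
    have heq : EqOn (fun s : ℝ => 2 * c / (a + |s|)) (fun s : ℝ => 2 * c * (a + s)⁻¹)
        (Set.uIcc 0 M) := by
      intro s hs
      rw [Set.uIcc_of_le (le_of_lt hM0)] at hs
      simp only [abs_of_nonneg hs.1, div_eq_mul_inv]
    rw [intervalIntegral.integral_congr heq, intervalIntegral.integral_const_mul]
    have h2 : ∫ s in (0:ℝ)..M, (a + s)⁻¹ = Real.log ((a + M) / a) := by
      rw [intervalIntegral.integral_comp_add_left (fun x : ℝ => x⁻¹) a, add_zero,
        integral_inv_of_pos ha (by linarith), add_comm]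
    rw [h2]
  have hlog : Real.log ((a + M) / a) ≤ M * Real.log (1 + 1 / a) := by
    have haa : (a + M) / a = 1 + M * (1 / a) := by field_simp
    have hb : 1 + M * (1 / a) ≤ (1 + 1 / a) ^ M :=
      one_add_mul_self_le_rpow_one_add (by have := one_div_pos.mpr ha; linarith) hM
    calc Real.log ((a + M) / a) ≤ Real.log ((1 + 1 / a) ^ M) := by
          apply Real.log_le_log (by rw [haa]; nlinarith [one_div_pos.mpr ha])
          rw [haa]; exact hb
      _ = M * Real.log (1 + 1 / a) := Real.log_rpow (by have := one_div_pos.mpr ha; linarith) M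
  have hlognn : 0 ≤ Real.log (1 + 1 / a) := Real.log_nonneg (by have := one_div_pos.mpr ha; linarith)
  rw [h1, hsplit, hneg, hpos]
  nlinarith [hlog, hc0, hlognn, Real.log_nonneg (show (1:ℝ) ≤ (a+M)/a by
    rw [le_div_iff₀ ha]; linarith)]

set_option maxHeartbeats 2000000 in
/-- local-to-nonlocal estimate for the kinetic weight, compactly supported
version; the constant `C` depends only on `M`. -/
theorem kinetic_weight_integral_compact (M : ℝ) (hM : 1 ≤ M) :
    ∃ C : ℝ, 0 < C ∧
      ∀ (g Ee : ℝ) (E B : ℝ × V3 → V3) (t : ℝ) (x : V3),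
        0 < g → 0 < x 2 →
        (∀ v : V3, 0 ≤ g - Ee - E (t, proj0 x) 2 - cross3 (vhat v) (B (t, proj0 x)) 2) →
        (∫⁻ v in {v : V3 | enorm3 v ≤ M}, ENNReal.ofReal (kinWeight E B Ee g t x v)⁻¹)
          ≤ ENNReal.ofReal (C * Real.log (1 + 1 / x 2)) := by
  have hM0 : (0:ℝ) < M := by linarith
  set c : ℝ := Real.sqrt (1 + M ^ 2) with hc_def
  have hc1 : 1 ≤ c := by
    rw [show (1:ℝ) = Real.sqrt 1 from (Real.sqrt_one).symm]
    exact Real.sqrt_le_sqrt (by nlinarith)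
  have hc0 : (0:ℝ) < c := by linarith
  refine ⟨16 * M ^ 3 * c, by positivity, ?_⟩
  intro g Ee E B t x hg hx hsign
  set a : ℝ := x 2 with ha_def
  have hL0 : 0 ≤ Real.log (1 + 1 / a) :=
    Real.log_nonneg (by have := one_div_pos.mpr hx; linarith)
  -- pointwise bound on the set
  have hpt : ∀ v : V3, enorm3 v ≤ M →
      ENNReal.ofReal (kinWeight E B Ee g t x v)⁻¹
        ≤ ENNReal.ofReal (2 * c / (a + |v 2|)) := by
    intro v hv
    have hdnn : 0 ≤ dot3 v v := by
      have : dot3 v v = v 0 * v 0 + v 1 * v 1 + v 2 * v 2 := rfl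
      nlinarith [mul_self_nonneg (v 0), mul_self_nonneg (v 1), mul_self_nonneg (v 2)]
    have hdM : dot3 v v ≤ M ^ 2 := by
      have h1 : Real.sqrt (dot3 v v) ≤ M := hv
      nlinarith [Real.sq_sqrt hdnn, Real.sqrt_nonneg (dot3 v v)]
    have hjap1 : 1 ≤ jap v := by
      rw [show (1:ℝ) = Real.sqrt 1 from (Real.sqrt_one).symm]
      exact Real.sqrt_le_sqrt (by linarith)
    have hjap0 : 0 < jap v := by linarith
    have hjapc : jap v ≤ c := Real.sqrt_le_sqrt (by nlinarith)
    have hvh : |vhat v 2| = |v 2| / jap v := by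
      have : vhat v 2 = (jap v)⁻¹ * v 2 := rfl
      rw [this, abs_mul, abs_inv, abs_of_pos hjap0, inv_mul_eq_div]
    set q : ℝ := vhat v 2 with hq_def
    set K : ℝ := g - Ee - E (t, proj0 x) 2 - cross3 (vhat v) (B (t, proj0 x)) 2 with hK_def
    have hK0 : 0 ≤ K := hsign v
    have hA : a ^ 2 + q ^ 2 ≤ a ^ 2 + q ^ 2 + 2 * K * a / jap v := by
      have : 0 ≤ 2 * K * a / jap v :=
        div_nonneg (by nlinarith) (le_of_lt hjap0)
      linarith
    have hlow : (a + |v 2|) / (2 * c) ≤ kinWeight E B Ee g t x v := by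
      have hsq : (a + |q|) / 2 ≤ Real.sqrt (a ^ 2 + q ^ 2) := by
        rw [show (a + |q|) / 2 = Real.sqrt (((a + |q|) / 2) ^ 2) from
          (Real.sqrt_sq (by positivity)).symm]
        apply Real.sqrt_le_sqrt
        nlinarith [sq_nonneg (a - |q|), sq_abs q]
      have hsq2 : Real.sqrt (a ^ 2 + q ^ 2) ≤ kinWeight E B Ee g t x v :=
        Real.sqrt_le_sqrt hA
      have hq2 : |v 2| ≤ c * |q| := by
        rw [hvh]
        rw [mul_div_assoc', le_div_iff₀ hjap0] at *
        nlinarith [abs_nonneg (v 2)]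
      have hstep : (a + |v 2|) / (2 * c) ≤ (a + |q|) / 2 := by
        rw [div_le_div_iff₀ (by positivity) (by norm_num)]
        nlinarith [abs_nonneg q]
      linarith
    have hd0 : 0 < (a + |v 2|) / (2 * c) := by positivity
    have hinv : (kinWeight E B Ee g t x v)⁻¹ ≤ 2 * c / (a + |v 2|) := by
      rw [show 2 * c / (a + |v 2|) = ((a + |v 2|) / (2 * c))⁻¹ from by
        rw [inv_div]]
      exact inv_anti₀ hd0 hlow
    exact ENNReal.ofReal_le_ofReal hinv
  -- measurability of the comparison function
  have hgmeas : Measurable fun v : V3 => ENNReal.ofReal (2 * c / (a + |v 2|)) := by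
    apply Measurable.ennreal_ofReal
    exact measurable_const.div ((measurable_const.add (measurable_pi_apply 2).abs))
  have step1 : (∫⁻ v in {v : V3 | enorm3 v ≤ M}, ENNReal.ofReal (kinWeight E B Ee g t x v)⁻¹)
      ≤ ∫⁻ v in {v : V3 | enorm3 v ≤ M}, ENNReal.ofReal (2 * c / (a + |v 2|)) :=
    setLIntegral_mono hgmeas hpt
  set box : Set V3 := Set.pi univ (fun _ : Fin 3 => Icc (-M) M) with hbox_def
  have hsub : {v : V3 | enorm3 v ≤ M} ⊆ box := by
    intro v hv
    have hdnn : 0 ≤ dot3 v v := by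
      have : dot3 v v = v 0 * v 0 + v 1 * v 1 + v 2 * v 2 := rfl
      nlinarith [mul_self_nonneg (v 0), mul_self_nonneg (v 1), mul_self_nonneg (v 2)]
    have hdM : dot3 v v ≤ M ^ 2 := by
      have h1 : Real.sqrt (dot3 v v) ≤ M := hv
      nlinarith [Real.sq_sqrt hdnn, Real.sqrt_nonneg (dot3 v v)]
    have hd : v 0 * v 0 + v 1 * v 1 + v 2 * v 2 ≤ M ^ 2 := hdM
    have hcoord : ∀ y : ℝ, y * y ≤ M ^ 2 → y ∈ Icc (-M) M := by
      intro y hy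
      constructor <;> nlinarith [sq_nonneg (y + M), sq_nonneg (y - M)]
    intro i _
    fin_cases i
    · exact hcoord (v 0) (by nlinarith [mul_self_nonneg (v 1), mul_self_nonneg (v 2)])
    · exact hcoord (v 1) (by nlinarith [mul_self_nonneg (v 0), mul_self_nonneg (v 2)])
    · exact hcoord (v 2) (by nlinarith [mul_self_nonneg (v 0), mul_self_nonneg (v 1)])
  have step2 : (∫⁻ v in {v : V3 | enorm3 v ≤ M}, ENNReal.ofReal (2 * c / (a + |v 2|)))
      ≤ ∫⁻ v in box, ENNReal.ofReal (2 * c / (a + |v 2|)) :=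
    lintegral_mono_set hsub
  -- compute the integral over the box
  set f : ℝ → ENNReal := fun s => ENNReal.ofReal (2 * c / (a + |s|)) with hf_def
  have hfmeas : Measurable f := by
    apply Measurable.ennreal_ofReal
    exact measurable_const.div (measurable_const.add measurable_abs)
  set box2 : Set (Fin 2 → ℝ) := Set.pi univ (fun _ : Fin 2 => Icc (-M) M) with hbox2_def
  have hbox2meas : MeasurableSet box2 := MeasurableSet.univ_pi (fun _ => measurableSet_Icc)
  have hboxmeas : MeasurableSet box := MeasurableSet.univ_pi (fun _ => measurableSet_Icc)
  set e := MeasurableEquiv.piFinSuccAbove (fun _ : Fin 3 => ℝ) 2 with he_def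
  have hpres : MeasurePreserving e :=
    MeasureTheory.volume_preserving_piFinSuccAbove (fun _ : Fin 3 => ℝ) 2
  set G : ℝ × (Fin 2 → ℝ) → ENNReal :=
    fun p => (Icc (-M) M ×ˢ box2).indicator (fun p => f p.1) p with hG_def
  have hGmeas : Measurable G :=
    (hfmeas.comp measurable_fst).indicator (measurableSet_Icc.prod hbox2meas)
  have hcomp : ∀ v : V3, box.indicator (fun v => f (v 2)) v = G (e v) := by
    intro v
    have hmem : v ∈ box ↔ e v ∈ Icc (-M) M ×ˢ box2 := by
      simp only [hbox_def, hbox2_def, he_def, MeasurableEquiv.piFinSuccAbove_apply,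
        Fin.insertNthEquiv_symm_apply, Set.mem_prod, Set.mem_pi, Set.mem_univ, true_implies]
      constructor
      · intro h
        exact ⟨h 2, fun j => h _⟩
      · rintro ⟨h2, hrest⟩ i
        have h0 : (Fin.succAbove 2 (0 : Fin 2)) = (0 : Fin 3) := by decide
        have h1 : (Fin.succAbove 2 (1 : Fin 2)) = (1 : Fin 3) := by decide
        fin_cases i
        · have := hrest 0; rwa [Fin.removeNth, h0] at this
        · have := hrest 1; rwa [Fin.removeNth, h1] at this
        · exact h2
    have hval : (e v).1 = v 2 := by
      simp [he_def, MeasurableEquiv.piFinSuccAbove_apply]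
    simp only [hG_def]
    by_cases h : v ∈ box
    · rw [Set.indicator_of_mem h, Set.indicator_of_mem (hmem.mp h), hval]
    · rw [Set.indicator_of_notMem h, Set.indicator_of_notMem (fun hh => h (hmem.mpr hh))]
  have step3 : (∫⁻ v in box, ENNReal.ofReal (2 * c / (a + |v 2|)))
      = ∫⁻ p, G p := by
    rw [← lintegral_indicator hboxmeas]
    calc ∫⁻ v, box.indicator (fun v => f (v 2)) v = ∫⁻ v, G (e v) := by
          exact lintegral_congr hcomp
      _ = ∫⁻ p, G p := hpres.lintegral_comp hGmeas
  have hvol2 : volume box2 = (ENNReal.ofReal (2 * M)) ^ 2 := by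
    rw [hbox2_def, volume_pi_pi]
    simp only [Real.volume_Icc, Finset.prod_const, Finset.card_univ, Fintype.card_fin]
    rw [show M - -M = 2 * M from by ring]
  have step4 : (∫⁻ p, G p)
      = (∫⁻ s in Icc (-M) M, f s) * (ENNReal.ofReal (2 * M)) ^ 2 := by
    rw [hG_def]
    rw [lintegral_indicator (measurableSet_Icc.prod hbox2meas)]
    rw [Measure.volume_eq_prod, ← Measure.prod_restrict]
    rw [lintegral_prod (fun p => f p.1) (by exact (hfmeas.comp measurable_fst).aemeasurable)]
    simp only [lintegral_const, Measure.restrict_apply_univ]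
    rw [lintegral_mul_const _ hfmeas, hvol2]
  have step5 : (∫⁻ s in Icc (-M) M, f s) * (ENNReal.ofReal (2 * M)) ^ 2
      ≤ ENNReal.ofReal (16 * M ^ 3 * c * Real.log (1 + 1 / a)) := by
    calc (∫⁻ s in Icc (-M) M, f s) * (ENNReal.ofReal (2 * M)) ^ 2
        ≤ ENNReal.ofReal (4 * c * M * Real.log (1 + 1 / a)) * (ENNReal.ofReal (2 * M)) ^ 2 :=
          mul_le_mul_left (oneD_bound c a M hc1 hx hM) _
      _ = ENNReal.ofReal (16 * M ^ 3 * c * Real.log (1 + 1 / a)) := by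
          rw [← ENNReal.ofReal_pow (by positivity), ← ENNReal.ofReal_mul (by positivity)]
          congr 1
          ring
  calc (∫⁻ v in {v : V3 | enorm3 v ≤ M}, ENNReal.ofReal (kinWeight E B Ee g t x v)⁻¹)
      ≤ ∫⁻ v in box, ENNReal.ofReal (2 * c / (a + |v 2|)) := le_trans step1 step2
    _ = (∫⁻ s in Icc (-M) M, f s) * (ENNReal.ofReal (2 * M)) ^ 2 := by rw [step3, step4]
    _ ≤ ENNReal.ofReal (16 * M ^ 3 * c * Real.log (1 + 1 / a)) := step5
end
end

section
/- Local-to-nonlocal estimate for the kinetic weight, velocity-decay version: let g > 0, E_e ∈ ℝ, and E, B : ℝ×ℝ³ → ℝ³, and define the kinetic weight α as in the context. Then for every δ > 0 there is a constant C_δ > 0, depending only on δ, such that for every (t,x) with x₃ > 0 at which g − E_e − E₃(t,x₁,x₂,0) − (v̂ × B(t,x₁,x₂,0))₃ ≥ 0 for all v ∈ ℝ³, one has ∫_{ℝ³} (1 + |v|^{4+δ})^{−1} α(t,x,v)^{−1} dv ≤ C_δ · ln(1 + 1/x₃). -/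
open MeasureTheory Set

noncomputable section

/-!
The drift term under the square root is nonnegative, so `α ≥ max(x₃, |v̂₃|)`, and since
`|v̂₃| = |v₃|/⟨v⟩` and `⟨v⟩ ≥ 1` this gives `α⁻¹ ≤ 2⟨v⟩/(x₃ + |v₃|)`. With `⟨v⟩ ≤ 1 + |v|`
and `(1 + |v|)^(4+δ) ≤ 2^(4+δ) (1 + |v|^(4+δ))`, the integrand is dominated by the product
`(1 + |v₁|)^-(1+δ/4) (1 + |v₂|)^-(1+δ/4) (1 + |v₃|)^-(1+δ/2) / (x₃ + |v₃|)`, so by Tonelli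
the integral factors into one-dimensional ones. Only the last one is singular as `x₃ → 0`:
on `|s| ≤ 1`, `∫ (x₃ + |s|)⁻¹ ds = 2 log(1 + 1/x₃)`, and on `|s| ≥ 1` one uses
`(x₃ + 1)⁻¹ ≤ log(1 + 1/x₃)`.
-/

open scoped ENNReal

lemma dot3_self_nonneg (v : V3) : 0 ≤ dot3 v v := by
  unfold dot3
  nlinarith [mul_self_nonneg (v 0), mul_self_nonneg (v 1), mul_self_nonneg (v 2)]

lemma one_le_jap (v : V3) : 1 ≤ jap v :=
  Real.one_le_sqrt.2 (le_add_of_nonneg_right (dot3_self_nonneg v))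

lemma jap_pos (v : V3) : 0 < jap v := zero_lt_one.trans_le (one_le_jap v)

lemma enorm3_nonneg (v : V3) : 0 ≤ enorm3 v := Real.sqrt_nonneg _

lemma abs_le_enorm3 (v : V3) (i : Fin 3) : |v i| ≤ enorm3 v := by
  refine Real.abs_le_sqrt ?_
  fin_cases i <;> simp [dot3] <;>
    nlinarith [mul_self_nonneg (v 0), mul_self_nonneg (v 1), mul_self_nonneg (v 2)]

lemma jap_le_one_add_enorm3 (v : V3) : jap v ≤ 1 + enorm3 v := by
  refine Real.sqrt_le_iff.2 ⟨by linarith [enorm3_nonneg v], ?_⟩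
  have : enorm3 v ^ 2 = dot3 v v := Real.sq_sqrt (dot3_self_nonneg v)
  nlinarith [enorm3_nonneg v]

lemma abs_vhat (v : V3) (i : Fin 3) : |vhat v i| = |v i| / jap v := by
  rw [vhat, Pi.smul_apply, smul_eq_mul, abs_mul, abs_inv, abs_of_pos (jap_pos v),
    inv_mul_eq_div]

section KineticWeight

variable {E B : ℝ × V3 → V3} {Ee g t : ℝ} {x v : V3}

lemma max_le_kinWeight (hx : 0 ≤ x 2)
    (hD : 0 ≤ g - Ee - E (t, proj0 x) 2 - cross3 (vhat v) (B (t, proj0 x)) 2) :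
    max (x 2) |vhat v 2| ≤ kinWeight E B Ee g t x v := by
  have hdrift : 0 ≤ 2 * (g - Ee - E (t, proj0 x) 2 - cross3 (vhat v) (B (t, proj0 x)) 2)
      * x 2 / jap v := by
    have := jap_pos v
    positivity
  refine Real.le_sqrt_of_sq_le ?_
  rcases le_total (x 2) |vhat v 2| with h | h
  · rw [max_eq_right h, sq_abs]
    nlinarith [sq_nonneg (x 2)]
  · rw [max_eq_left h]
    nlinarith [sq_nonneg (vhat v 2)]

lemma inv_kinWeight_le (hx : 0 < x 2)
    (hD : 0 ≤ g - Ee - E (t, proj0 x) 2 - cross3 (vhat v) (B (t, proj0 x)) 2) :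
    (kinWeight E B Ee g t x v)⁻¹ ≤ 2 * jap v / (x 2 + |v 2|) := by
  have hJ := jap_pos v
  have hlower : (x 2 + |v 2|) / (2 * jap v) ≤ kinWeight E B Ee g t x v :=
    calc (x 2 + |v 2|) / (2 * jap v) = (x 2 / jap v + |vhat v 2|) / 2 := by
          rw [abs_vhat]
          field_simp
      _ ≤ (x 2 + |vhat v 2|) / 2 := by
          gcongr
          exact div_le_self hx.le (one_le_jap v)
      _ ≤ max (x 2) |vhat v 2| := by
          linarith [le_max_left (x 2) |vhat v 2|, le_max_right (x 2) |vhat v 2|]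
      _ ≤ kinWeight E B Ee g t x v := max_le_kinWeight hx.le hD
  calc (kinWeight E B Ee g t x v)⁻¹ ≤ ((x 2 + |v 2|) / (2 * jap v))⁻¹ :=
        inv_anti₀ (by positivity) hlower
    _ = 2 * jap v / (x 2 + |v 2|) := inv_div _ _

end KineticWeight

lemma one_add_rpow_le_two_rpow_mul {r p : ℝ} (hr : 0 ≤ r) (hp : 0 ≤ p) :
    (1 + r) ^ p ≤ 2 ^ p * (1 + r ^ p) := by
  rcases le_total r 1 with h | h
  · calc (1 + r) ^ p ≤ 2 ^ p := by gcongr; linarith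
      _ ≤ 2 ^ p * (1 + r ^ p) := le_mul_of_one_le_right (by positivity) (by simp; positivity)
  · calc (1 + r) ^ p ≤ (2 * r) ^ p := by gcongr; linarith
      _ = 2 ^ p * r ^ p := Real.mul_rpow zero_le_two hr
      _ ≤ 2 ^ p * (1 + r ^ p) := by gcongr; linarith

lemma inv_one_add_enorm3_rpow_mul_jap_le {p : ℝ} (hp : 0 ≤ p) (v : V3) :
    (1 + enorm3 v ^ p)⁻¹ * jap v ≤ 2 ^ p * (1 + enorm3 v) ^ (1 - p) := by
  have hr := enorm3_nonneg v
  have hinv : (1 + enorm3 v ^ p)⁻¹ ≤ 2 ^ p * ((1 + enorm3 v) ^ p)⁻¹ := by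
    rw [← div_eq_mul_inv, le_div_iff₀ (by positivity), inv_mul_le_iff₀ (by positivity),
      mul_comm]
    exact one_add_rpow_le_two_rpow_mul hr hp
  calc (1 + enorm3 v ^ p)⁻¹ * jap v ≤ 2 ^ p * ((1 + enorm3 v) ^ p)⁻¹ * (1 + enorm3 v) :=
        mul_le_mul hinv (jap_le_one_add_enorm3 v) (jap_pos v).le (by positivity)
    _ = 2 ^ p * (1 + enorm3 v) ^ (1 - p) := by
        rw [Real.rpow_sub (by positivity), Real.rpow_one]
        ring

lemma one_add_enorm3_rpow_neg_le {a b c : ℝ} (ha : 0 ≤ a) (hb : 0 ≤ b) (hc : 0 ≤ c) (v : V3) :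
    (1 + enorm3 v) ^ (-(a + b + c))
      ≤ (1 + |v 0|) ^ (-a) * (1 + |v 1|) ^ (-b) * (1 + |v 2|) ^ (-c) := by
  have hpos : 0 < 1 + enorm3 v := by linarith [enorm3_nonneg v]
  have hcoord : ∀ (i : Fin 3) (e : ℝ), 0 ≤ e → (1 + enorm3 v) ^ (-e) ≤ (1 + |v i|) ^ (-e) :=
    fun i e he ↦ Real.rpow_le_rpow_of_nonpos (by positivity)
      (by linarith [abs_le_enorm3 v i]) (by linarith)
  rw [neg_add, neg_add, Real.rpow_add hpos, Real.rpow_add hpos]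
  gcongr ?_ * ?_ * ?_
  exacts [hcoord 0 a ha, hcoord 1 b hb, hcoord 2 c hc]

lemma inv_one_add_enorm3_rpow_mul_inv_kinWeight_le {δ : ℝ} (hδ : 0 < δ)
    {E B : ℝ × V3 → V3} {Ee g t : ℝ} {x v : V3} (hx : 0 < x 2)
    (hD : 0 ≤ g - Ee - E (t, proj0 x) 2 - cross3 (vhat v) (B (t, proj0 x)) 2) :
    (1 + enorm3 v ^ (4 + δ))⁻¹ * (kinWeight E B Ee g t x v)⁻¹
      ≤ 2 * 2 ^ (4 + δ) * ((1 + |v 0|) ^ (-(1 + δ / 4)) * (1 + |v 1|) ^ (-(1 + δ / 4))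
          * ((1 + |v 2|) ^ (-(1 + δ / 2)) / (x 2 + |v 2|))) := by
  have hw : 0 ≤ (1 + enorm3 v ^ (4 + δ))⁻¹ := by
    have := Real.rpow_nonneg (enorm3_nonneg v) (4 + δ)
    positivity
  have hd : 0 < x 2 + |v 2| := by positivity
  calc (1 + enorm3 v ^ (4 + δ))⁻¹ * (kinWeight E B Ee g t x v)⁻¹
      ≤ (1 + enorm3 v ^ (4 + δ))⁻¹ * (2 * jap v / (x 2 + |v 2|)) :=
        mul_le_mul_of_nonneg_left (inv_kinWeight_le hx hD) hw
    _ = 2 * ((1 + enorm3 v ^ (4 + δ))⁻¹ * jap v) / (x 2 + |v 2|) := by ring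
    _ ≤ 2 * (2 ^ (4 + δ) * (1 + enorm3 v) ^ (-((1 + δ / 4) + (1 + δ / 4) + (1 + δ / 2))))
          / (x 2 + |v 2|) := by
        rw [show -((1 + δ / 4) + (1 + δ / 4) + (1 + δ / 2)) = 1 - (4 + δ) by ring]
        exact div_le_div_of_nonneg_right (mul_le_mul_of_nonneg_left
          (inv_one_add_enorm3_rpow_mul_jap_le (by positivity) v) zero_le_two) hd.le
    _ ≤ 2 * (2 ^ (4 + δ) * ((1 + |v 0|) ^ (-(1 + δ / 4)) * (1 + |v 1|) ^ (-(1 + δ / 4))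
          * (1 + |v 2|) ^ (-(1 + δ / 2)))) / (x 2 + |v 2|) := by
        gcongr
        exact one_add_enorm3_rpow_neg_le (by positivity) (by positivity) (by positivity) v
    _ = _ := by ring

theorem lintegral_comp_abs (f : ℝ → ℝ≥0∞) : ∫⁻ x, f |x| = 2 * ∫⁻ x in Ioi 0, f x := by
  have hpos : ∫⁻ x in Ioi 0, f |x| = ∫⁻ x in Ioi 0, f x :=
    setLIntegral_congr_fun measurableSet_Ioi fun x hx ↦ by rw [abs_of_pos hx]
  have hneg : ∫⁻ x in Iic 0, f |x| = ∫⁻ x in Ioi 0, f |x| := by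
    have := (Measure.measurePreserving_neg (volume : Measure ℝ)).setLIntegral_comp_preimage_emb
      (Homeomorph.neg ℝ).measurableEmbedding (fun x ↦ f |x|) (Ioi 0)
    simpa only [neg_preimage, neg_Ioi, neg_zero, abs_neg,
      setLIntegral_congr (Iio_ae_eq_Iic (a := (0 : ℝ)))] using this
  calc ∫⁻ x, f |x| = ∫⁻ x in Iic 0 ∪ Ioi 0, f |x| := by
        rw [Iic_union_Ioi, Measure.restrict_univ]
    _ = 2 * ∫⁻ x in Ioi 0, f x := by
        rw [lintegral_union measurableSet_Ioi (Iic_disjoint_Ioi le_rfl), hneg, hpos, two_mul]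

theorem lintegral_Ioi_one_add_rpow_neg {β : ℝ} (hβ : 0 < β) :
    ∫⁻ s in Ioi 0, ENNReal.ofReal ((1 + s) ^ (-(1 + β))) = ENNReal.ofReal β⁻¹ := by
  have hexp : -(1 + β) < -1 := by linarith
  have hshift := (measurePreserving_add_left (volume : Measure ℝ) 1).setLIntegral_comp_preimage_emb
    (measurableEmbedding_addLeft 1) (fun t ↦ ENNReal.ofReal (t ^ (-(1 + β)))) (Ioi 1)
  simp only [preimage_const_add_Ioi, sub_self] at hshift
  rw [hshift, ← ofReal_integral_eq_lintegral_ofReal (integrableOn_Ioi_rpow_of_lt hexp one_pos)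
      (ae_restrict_of_forall_mem measurableSet_Ioi fun t ht ↦
        Real.rpow_nonneg (zero_le_one.trans ht.le) _),
    integral_Ioi_rpow_of_lt hexp one_pos, Real.one_rpow, show -(1 + β) + 1 = -β by ring,
    neg_div_neg_eq, one_div]

theorem lintegral_one_add_abs_rpow_neg {β : ℝ} (hβ : 0 < β) :
    ∫⁻ s, ENNReal.ofReal ((1 + |s|) ^ (-(1 + β))) = ENNReal.ofReal (2 / β) := by
  rw [lintegral_comp_abs fun s ↦ ENNReal.ofReal ((1 + s) ^ (-(1 + β))),
    lintegral_Ioi_one_add_rpow_neg hβ, div_eq_mul_inv, ENNReal.ofReal_mul zero_le_two,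
    ENNReal.ofReal_ofNat]

lemma inv_add_one_le_log_one_add_inv {a : ℝ} (ha : 0 < a) :
    (a + 1)⁻¹ ≤ Real.log (1 + 1 / a) := by
  convert Real.one_sub_inv_le_log_of_pos (show 0 < 1 + 1 / a by positivity) using 1
  field_simp
  ring

theorem integral_Ioc_inv_add {a : ℝ} (ha : 0 < a) :
    ∫ s in Ioc (0 : ℝ) 1, (a + s)⁻¹ = Real.log (1 + 1 / a) := by
  rw [← intervalIntegral.integral_of_le zero_le_one,
    intervalIntegral.integral_comp_add_left (fun t : ℝ ↦ t⁻¹) a, add_zero,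
    integral_inv_of_pos ha (by linarith)]
  congr 1
  field_simp

theorem setLIntegral_Ioc_rpow_div_add_le {β a : ℝ} (hβ : -1 ≤ β) (ha : 0 < a) :
    ∫⁻ s in Ioc 0 1, ENNReal.ofReal ((1 + s) ^ (-(1 + β)) / (a + s))
      ≤ ENNReal.ofReal (Real.log (1 + 1 / a)) :=
  calc ∫⁻ s in Ioc 0 1, ENNReal.ofReal ((1 + s) ^ (-(1 + β)) / (a + s))
      ≤ ∫⁻ s in Ioc 0 1, ENNReal.ofReal (a + s)⁻¹ := by
        refine setLIntegral_mono (by fun_prop) fun s hs ↦ ENNReal.ofReal_le_ofReal ?_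
        rw [div_eq_mul_inv]
        refine mul_le_of_le_one_left (inv_pos.2 (by linarith [hs.1])).le ?_
        exact Real.rpow_le_one_of_one_le_of_nonpos (by linarith [hs.1]) (by linarith)
    _ = ENNReal.ofReal (Real.log (1 + 1 / a)) := by
        rw [← ofReal_integral_eq_lintegral_ofReal, integral_Ioc_inv_add ha]
        · refine (ContinuousOn.integrableOn_Icc ?_).mono_set Ioc_subset_Icc_self
          exact (continuousOn_const.add continuousOn_id).inv₀ fun s hs ↦
            (add_pos_of_pos_of_nonneg ha hs.1).ne'
        · exact ae_restrict_of_forall_mem measurableSet_Ioc fun s hs ↦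
            (inv_pos.2 (by linarith [hs.1])).le

theorem setLIntegral_Ioi_one_rpow_div_add_le {β a : ℝ} (hβ : 0 < β) (ha : 0 < a) :
    ∫⁻ s in Ioi 1, ENNReal.ofReal ((1 + s) ^ (-(1 + β)) / (a + s))
      ≤ ENNReal.ofReal (Real.log (1 + 1 / a)) * ENNReal.ofReal β⁻¹ := by
  set L := Real.log (1 + 1 / a)
  have hL : 0 ≤ L := Real.log_nonneg (by simp [ha.le])
  calc ∫⁻ s in Ioi 1, ENNReal.ofReal ((1 + s) ^ (-(1 + β)) / (a + s))
      ≤ ∫⁻ s in Ioi 1, ENNReal.ofReal L * ENNReal.ofReal ((1 + s) ^ (-(1 + β))) := by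
        refine setLIntegral_mono (by fun_prop) fun s (hs : 1 < s) ↦ ?_
        rw [← ENNReal.ofReal_mul hL, div_eq_mul_inv, mul_comm L]
        have hq : 0 ≤ (1 + s) ^ (-(1 + β)) := Real.rpow_nonneg (by linarith) _
        refine ENNReal.ofReal_le_ofReal (mul_le_mul_of_nonneg_left ?_ hq)
        calc (a + s)⁻¹ ≤ (a + 1)⁻¹ := inv_anti₀ (by linarith) (by linarith)
          _ ≤ L := inv_add_one_le_log_one_add_inv ha
    _ = ENNReal.ofReal L * ∫⁻ s in Ioi 1, ENNReal.ofReal ((1 + s) ^ (-(1 + β))) :=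
        lintegral_const_mul' _ _ ENNReal.ofReal_ne_top
    _ ≤ ENNReal.ofReal L * ENNReal.ofReal β⁻¹ := by
        rw [← lintegral_Ioi_one_add_rpow_neg hβ]
        exact mul_le_mul_right (lintegral_mono_set (Ioi_subset_Ioi zero_le_one)) _

theorem lintegral_one_add_abs_rpow_neg_div_add_abs_le {β a : ℝ} (hβ : 0 < β) (ha : 0 < a) :
    ∫⁻ s, ENNReal.ofReal ((1 + |s|) ^ (-(1 + β)) / (a + |s|))
      ≤ ENNReal.ofReal ((2 + 2 / β) * Real.log (1 + 1 / a)) := by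
  have hL : 0 ≤ Real.log (1 + 1 / a) := Real.log_nonneg (by simp [ha.le])
  rw [lintegral_comp_abs fun s ↦ ENNReal.ofReal ((1 + s) ^ (-(1 + β)) / (a + s)),
    ← Ioc_union_Ioi_eq_Ioi zero_le_one,
    lintegral_union measurableSet_Ioi (Ioc_disjoint_Ioi le_rfl)]
  calc 2 * (_ + _) ≤ 2 * (ENNReal.ofReal (Real.log (1 + 1 / a))
        + ENNReal.ofReal (Real.log (1 + 1 / a)) * ENNReal.ofReal β⁻¹) := by
        gcongr
        exacts [setLIntegral_Ioc_rpow_div_add_le (by linarith) ha,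
          setLIntegral_Ioi_one_rpow_div_add_le hβ ha]
    _ = ENNReal.ofReal ((2 + 2 / β) * Real.log (1 + 1 / a)) := by
        rw [← ENNReal.ofReal_mul hL, ← ENNReal.ofReal_add hL (by positivity),
          ← ENNReal.ofReal_ofNat 2, ← ENNReal.ofReal_mul zero_le_two]
        congr 1
        ring

theorem lintegral_fin_prod_eq_prod {E : Type*} [MeasurableSpace E] {μ : Measure E}
    [SigmaFinite μ] {n : ℕ} (f : Fin n → E → ℝ≥0∞) (hf : ∀ i, Measurable (f i)) :
    ∫⁻ x : Fin n → E, ∏ i, f i (x i) ∂Measure.pi (fun _ ↦ μ) = ∏ i, ∫⁻ y, f i y ∂μ := by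
  induction n with
  | zero => simp
  | succ n ih =>
    rw [← ((measurePreserving_piFinSuccAbove (fun _ ↦ μ) 0).symm).lintegral_comp_emb
      (MeasurableEquiv.measurableEmbedding _)]
    simp only [MeasurableEquiv.piFinSuccAbove_symm_apply, Fin.insertNthEquiv,
      Fin.prod_univ_succ, Fin.insertNth_zero, Equiv.coe_fn_mk, Fin.cons_succ, Fin.cons_zero,
      cast_eq]
    rw [lintegral_prod_mul (g := fun y : Fin n → E ↦ ∏ i, f i.succ (y i)) (hf 0).aemeasurable
      (Finset.measurable_prod _ fun i _ ↦ (hf i.succ).comp (measurable_pi_apply i)).aemeasurable,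
      ih (fun i ↦ f i.succ) fun i ↦ hf i.succ]

theorem lintegral_fin_three_mul (f₀ f₁ f₂ : ℝ → ℝ≥0∞) (h₀ : Measurable f₀)
    (h₁ : Measurable f₁) (h₂ : Measurable f₂) :
    ∫⁻ v : Fin 3 → ℝ, f₀ (v 0) * f₁ (v 1) * f₂ (v 2)
      = (∫⁻ s, f₀ s) * (∫⁻ s, f₁ s) * ∫⁻ s, f₂ s := by
  rw [volume_pi]
  simpa [Fin.prod_univ_three] using
    lintegral_fin_prod_eq_prod (μ := volume) ![f₀, f₁, f₂] (by simp [Fin.forall_fin_succ, *])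

/-- local-to-nonlocal estimate for the kinetic weight, velocity-decay
version; the constant `C` depends only on `δ`. -/
theorem kinetic_weight_integral_decay (δ : ℝ) (hδ : 0 < δ) :
    ∃ C : ℝ, 0 < C ∧
      ∀ (g Ee : ℝ) (E B : ℝ × V3 → V3) (t : ℝ) (x : V3),
        0 < g → 0 < x 2 →
        (∀ v : V3, 0 ≤ g - Ee - E (t, proj0 x) 2 - cross3 (vhat v) (B (t, proj0 x)) 2) →
        (∫⁻ v : V3,
            ENNReal.ofReal ((1 + enorm3 v ^ (4 + δ))⁻¹ * (kinWeight E B Ee g t x v)⁻¹))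
          ≤ ENNReal.ofReal (C * Real.log (1 + 1 / x 2)) := by
  refine ⟨2 * 2 ^ (4 + δ) * (2 / (δ / 4)) * (2 / (δ / 4)) * (2 + 2 / (δ / 2)),
    by positivity, fun g Ee E B t x _ hx hD ↦ ?_⟩
  set f : ℝ → ℝ≥0∞ := fun s ↦ ENNReal.ofReal ((1 + |s|) ^ (-(1 + δ / 4)))
  set h : ℝ → ℝ≥0∞ := fun s ↦ ENNReal.ofReal ((1 + |s|) ^ (-(1 + δ / 2)) / (x 2 + |s|))
  have hpt : ∀ v : V3,
      ENNReal.ofReal ((1 + enorm3 v ^ (4 + δ))⁻¹ * (kinWeight E B Ee g t x v)⁻¹)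
        ≤ ENNReal.ofReal (2 * 2 ^ (4 + δ)) * (f (v 0) * f (v 1) * h (v 2)) := fun v ↦ by
    refine (ENNReal.ofReal_le_ofReal
      (inv_one_add_enorm3_rpow_mul_inv_kinWeight_le hδ hx (hD v))).trans_eq ?_
    have h₀ : 0 ≤ (1 + |v 0|) ^ (-(1 + δ / 4)) := by positivity
    have h₁ : 0 ≤ (1 + |v 1|) ^ (-(1 + δ / 4)) := by positivity
    rw [ENNReal.ofReal_mul (by positivity : (0 : ℝ) ≤ 2 * 2 ^ (4 + δ)),
      ENNReal.ofReal_mul (mul_nonneg h₀ h₁), ENNReal.ofReal_mul h₀]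
  calc _ ≤ ∫⁻ v : V3, ENNReal.ofReal (2 * 2 ^ (4 + δ)) * (f (v 0) * f (v 1) * h (v 2)) :=
        lintegral_mono hpt
    _ = ENNReal.ofReal (2 * 2 ^ (4 + δ)) * ((∫⁻ s, f s) * (∫⁻ s, f s) * ∫⁻ s, h s) := by
        rw [lintegral_const_mul' _ _ ENNReal.ofReal_ne_top,
          lintegral_fin_three_mul f f h (by fun_prop) (by fun_prop) (by fun_prop)]
    _ ≤ ENNReal.ofReal (2 * 2 ^ (4 + δ)) * (ENNReal.ofReal (2 / (δ / 4))
          * ENNReal.ofReal (2 / (δ / 4))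
          * ENNReal.ofReal ((2 + 2 / (δ / 2)) * Real.log (1 + 1 / x 2))) := by
        rw [lintegral_one_add_abs_rpow_neg (by positivity)]
        gcongr
        exact lintegral_one_add_abs_rpow_neg_div_add_abs_le (by positivity) hx
    _ = _ := by
        rw [← ENNReal.ofReal_mul (by positivity), ← ENNReal.ofReal_mul (by positivity),
          ← ENNReal.ofReal_mul (by positivity)]
        congr 1
        ring
end
end

section
/- Gradient bound for the magnetic S-kernel: for every ω ∈ ℝ³ with |ω| = 1 and every i ∈ {1,2,3}, the function v ↦ (ω × v̂)ᵢ / (1 + v̂·ω) is differentiable on ℝ³ and the Euclidean norm of its gradient with respect to v is at most 12 √(1 + |v|²) for every v ∈ ℝ³. -/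
open MeasureTheory Set

noncomputable section

/-!
With `c = eᵢ × ω` one has `(ω × v)ᵢ = ⟪c, v⟫`, so the kernel is `k(v) = ⟪c, v⟫ / (⟨v⟩ + ⟪ω, v⟫)`,
which makes sense in any real inner product space. Its gradient is
`c / D - ⟪c, v⟫ (v / ⟨v⟩ + ω) / D²` with
`D = ⟨v⟩ + ⟪ω, v⟫ ≥ ⟨v⟩ - |v| = 1 / (⟨v⟩ + |v|) ≥ 1 / (2⟨v⟩)`.
Since `c ⊥ ω` and `|c| ≤ 1`, we have `⟪c, v⟫² ≤ |v|² - ⟪ω, v⟫² ≤ 2⟨v⟩D`, while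
`|v / ⟨v⟩ + ω|² ≤ 2D / ⟨v⟩`; so the second term has norm at most `2 / D`, and the gradient
at most `3 / D ≤ 6⟨v⟩`.
-/

open WithLp
open scoped RealInnerProductSpace Matrix

section
variable {E : Type*} [NormedAddCommGroup E] [InnerProductSpace ℝ E]

theorem hasFDerivAt_sqrt_one_add_norm_sq (v : E) :
    HasFDerivAt (fun w : E => √(1 + ‖w‖ ^ 2)) (innerSL ℝ ((√(1 + ‖v‖ ^ 2))⁻¹ • v)) v := by
  have h := ((hasStrictFDerivAt_norm_sq v).hasFDerivAt.const_add 1).sqrt (by positivity)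
  convert h using 1
  ext w
  simp only [map_smul, smul_apply, coe_innerSL_apply, smul_eq_mul, one_div,
    mul_inv_rev, nsmul_eq_mul, Nat.cast_ofNat]
  ring

theorem inv_two_mul_sqrt_le_sqrt_add_inner {ω : E} (hω : ‖ω‖ ≤ 1) (v : E) :
    (2 * √(1 + ‖v‖ ^ 2))⁻¹ ≤ √(1 + ‖v‖ ^ 2) + ⟪ω, v⟫ := by
  have hs : √(1 + ‖v‖ ^ 2) ^ 2 = 1 + ‖v‖ ^ 2 := Real.sq_sqrt (by positivity)
  have hlt : ‖v‖ < √(1 + ‖v‖ ^ 2) := by rw [Real.lt_sqrt (norm_nonneg v)]; linarith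
  have hinner : -‖v‖ ≤ ⟪ω, v⟫ := by
    have := (abs_real_inner_le_norm ω v).trans (mul_le_of_le_one_left (norm_nonneg v) hω)
    linarith [neg_abs_le ⟪ω, v⟫]
  rw [inv_le_iff_one_le_mul₀ (by positivity)]
  nlinarith [norm_nonneg v]

theorem sqrt_one_add_norm_sq_add_inner_pos {ω : E} (hω : ‖ω‖ ≤ 1) (v : E) :
    0 < √(1 + ‖v‖ ^ 2) + ⟪ω, v⟫ :=
  (inv_pos.2 (by positivity)).trans_le (inv_two_mul_sqrt_le_sqrt_add_inner hω v)

def magneticKernel (c ω w : E) : ℝ := ⟪c, w⟫ / (√(1 + ‖w‖ ^ 2) + ⟪ω, w⟫)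

def magneticKernelGrad (c ω v : E) : E :=
  (√(1 + ‖v‖ ^ 2) + ⟪ω, v⟫)⁻¹ • c -
    (⟪c, v⟫ / (√(1 + ‖v‖ ^ 2) + ⟪ω, v⟫) ^ 2) • ((√(1 + ‖v‖ ^ 2))⁻¹ • v + ω)

theorem hasFDerivAt_magneticKernel (c ω : E) {v : E} (hden : √(1 + ‖v‖ ^ 2) + ⟪ω, v⟫ ≠ 0) :
    HasFDerivAt (magneticKernel c ω) (innerSL ℝ (magneticKernelGrad c ω v)) v := by
  have hden' : HasFDerivAt (fun w : E => √(1 + ‖w‖ ^ 2) + ⟪ω, w⟫)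
      (innerSL ℝ ((√(1 + ‖v‖ ^ 2))⁻¹ • v + ω)) v := by
    rw [map_add]
    exact (hasFDerivAt_sqrt_one_add_norm_sq v).add (innerSL ℝ ω).hasFDerivAt
  have h := (innerSL ℝ c).hasFDerivAt.mul ((hasDerivAt_inv hden).comp_hasFDerivAt v hden')
  refine (h.congr_fderiv ?_).congr_of_eventuallyEq (.of_forall fun w => div_eq_mul_inv _ _)
  ext w
  simp only [magneticKernelGrad, coe_innerSL_apply, map_add, map_sub, map_smul, smul_add,
    neg_smul, smul_neg, Function.comp_apply, add_apply, neg_apply, smul_apply, sub_apply,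
    smul_eq_mul]
  ring

theorem inner_sq_le_norm_sq_sub_inner_sq {c ω : E} (hc : ‖c‖ ≤ 1) (hω : ‖ω‖ = 1)
    (hcω : ⟪c, ω⟫ = 0) (v : E) : ⟪c, v⟫ ^ 2 ≤ ‖v‖ ^ 2 - ⟪ω, v⟫ ^ 2 := by
  set p := v - ⟪ω, v⟫ • ω
  have hcp : ⟪c, p⟫ = ⟪c, v⟫ := by simp [p, inner_sub_right, inner_smul_right, hcω]
  have hp : ‖p‖ ^ 2 = ‖v‖ ^ 2 - ⟪ω, v⟫ ^ 2 := by
    rw [norm_sub_sq_real, norm_smul, inner_smul_right, hω, real_inner_comm]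
    simp only [Real.norm_eq_abs, mul_one, sq_abs]
    ring
  rw [← hcp, ← hp]
  calc ⟪c, p⟫ ^ 2 ≤ (‖c‖ * ‖p‖) ^ 2 := by
        simpa [sq_abs] using pow_le_pow_left₀ (abs_nonneg _) (abs_real_inner_le_norm c p) 2
    _ ≤ ‖p‖ ^ 2 := by
        gcongr; exact mul_le_of_le_one_left (norm_nonneg p) hc

theorem norm_magneticKernelGrad_le {c ω : E} (hc : ‖c‖ ≤ 1) (hω : ‖ω‖ = 1) (hcω : ⟪c, ω⟫ = 0)
    (v : E) : ‖magneticKernelGrad c ω v‖ ≤ 3 / (√(1 + ‖v‖ ^ 2) + ⟪ω, v⟫) := by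
  have hden := sqrt_one_add_norm_sq_add_inner_pos hω.le v
  have hs2 : √(1 + ‖v‖ ^ 2) ^ 2 = 1 + ‖v‖ ^ 2 := Real.sq_sqrt (by positivity)
  have hs : 0 < √(1 + ‖v‖ ^ 2) := by positivity
  have hm : |⟪ω, v⟫| ≤ ‖v‖ := by simpa [hω] using abs_real_inner_le_norm ω v
  have hnum := inner_sq_le_norm_sq_sub_inner_sq hc hω hcω v
  unfold magneticKernelGrad
  set s := √(1 + ‖v‖ ^ 2)
  set m := ⟪ω, v⟫
  set u := s⁻¹ • v + ω
  have hu : ‖u‖ ^ 2 * s ≤ 2 * (s + m) := by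
    rw [norm_add_sq_real, norm_smul, inner_smul_left, hω, real_inner_comm]
    simp only [norm_inv, Real.norm_eq_abs, abs_of_pos hs, conj_trivial]
    have : ‖v‖ ^ 2 ≤ s ^ 2 := by linarith
    field_simp
    nlinarith [norm_nonneg v]
  have hnum' : ⟪c, v⟫ ^ 2 ≤ 2 * s * (s + m) := by
    nlinarith [abs_le.1 hm, norm_nonneg v, sq_nonneg (‖v‖ - s)]
  have hslope : |⟪c, v⟫| * ‖u‖ ≤ 2 * (s + m) := by
    refine (pow_le_pow_iff_left₀ (by positivity) (by positivity) two_ne_zero).1 ?_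
    rw [mul_pow, sq_abs]
    nlinarith
  calc ‖(s + m)⁻¹ • c - (⟪c, v⟫ / (s + m) ^ 2) • u‖
      ≤ ‖(s + m)⁻¹ • c‖ + ‖(⟪c, v⟫ / (s + m) ^ 2) • u‖ := norm_sub_le _ _
    _ = (s + m)⁻¹ * ‖c‖ + |⟪c, v⟫| * ‖u‖ / (s + m) ^ 2 := by
        simp only [norm_smul, norm_div, norm_inv, norm_pow, Real.norm_eq_abs, abs_of_pos hden]
        ring
    _ ≤ (s + m)⁻¹ * 1 + 2 * (s + m) / (s + m) ^ 2 := by gcongr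
    _ = 3 / (s + m) := by field_simp; ring

theorem norm_magneticKernelGrad_le_six_mul {c ω : E} (hc : ‖c‖ ≤ 1) (hω : ‖ω‖ = 1)
    (hcω : ⟪c, ω⟫ = 0) (v : E) : ‖magneticKernelGrad c ω v‖ ≤ 6 * √(1 + ‖v‖ ^ 2) := by
  have hden := sqrt_one_add_norm_sq_add_inner_pos hω.le v
  have hlow := inv_two_mul_sqrt_le_sqrt_add_inner hω.le v
  refine (norm_magneticKernelGrad_le hc hω hcω v).trans ?_
  rw [div_le_iff₀ hden]
  rw [inv_le_iff_one_le_mul₀ (by positivity)] at hlow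
  linarith

end

theorem dot3_eq_inner (a b : V3) : dot3 a b = ⟪toLp 2 a, toLp 2 b⟫ := by
  simp only [dot3, PiLp.inner_apply, RCLike.inner_apply, Real.ringHom_apply, Fin.sum_univ_three]
  ring

theorem enorm3_eq_norm (a : V3) : enorm3 a = ‖toLp 2 a‖ := by
  rw [enorm3, dot3_eq_inner, real_inner_self_eq_norm_sq, Real.sqrt_sq (norm_nonneg _)]

theorem dot3_eq_dotProduct (a b : V3) : dot3 a b = a ⬝ᵥ b := by
  simp [dot3, dotProduct, Fin.sum_univ_three]

theorem cross3_eq_crossProduct (a b : V3) : cross3 a b = a ⨯₃ b := by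
  rw [cross_apply]; rfl

theorem cross3_apply_eq_dot3_cross3_single (ω w : V3) (i : Fin 3) :
    cross3 ω w i = dot3 (cross3 (Pi.single i 1) ω) w := by
  rw [cross3_eq_crossProduct, cross3_eq_crossProduct, dot3_eq_dotProduct, dotProduct_comm,
    ← triple_product_permutation, ← triple_product_permutation, single_dotProduct, one_mul]

theorem dot3_cross3_single_self (ω : V3) (i : Fin 3) :
    dot3 (cross3 (Pi.single i 1) ω) ω = 0 := by
  rw [dot3_eq_dotProduct, dotProduct_comm, cross3_eq_crossProduct, dot_cross_self]

theorem dot3_cross3_single_self_le (ω : V3) (i : Fin 3) :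
    dot3 (cross3 (Pi.single i 1) ω) (cross3 (Pi.single i 1) ω) ≤ dot3 ω ω := by
  simp only [dot3_eq_dotProduct, cross3_eq_crossProduct, cross_dot_cross, single_dotProduct,
    dotProduct_single, one_mul, mul_one, Pi.single_eq_same]
  nlinarith [mul_self_nonneg (ω i)]

theorem cross3_vhat_div_eq_magneticKernel (ω w : V3) (i : Fin 3) :
    cross3 ω (vhat w) i / (1 + dot3 (vhat w) ω) =
      magneticKernel (toLp 2 (cross3 (Pi.single i 1) ω)) (toLp 2 ω) (toLp 2 w) := by
  have hjap : jap w = √(1 + ‖toLp 2 w‖ ^ 2) := by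
    rw [jap, dot3_eq_inner, real_inner_self_eq_norm_sq]
  have hjap0 : jap w ≠ 0 := by rw [hjap]; positivity
  rw [magneticKernel, cross3_apply_eq_dot3_cross3_single, vhat, dot3_eq_inner, dot3_eq_inner,
    WithLp.toLp_smul, inner_smul_right, real_inner_smul_left, real_inner_comm (toLp 2 ω), ← hjap]
  field_simp

theorem enorm3_fderiv_comp_toLp_eq_norm {G : EuclideanSpace ℝ (Fin 3) → ℝ}
    {g : EuclideanSpace ℝ (Fin 3)} {v : V3} (h : HasFDerivAt G (innerSL ℝ g) (toLp 2 v)) :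
    enorm3 (fun j => fderiv ℝ (fun w => G (toLp 2 w)) v (Pi.single j 1)) = ‖g‖ := by
  have hF : HasFDerivAt (fun w : V3 => G (toLp 2 w))
      ((innerSL ℝ g).comp (EuclideanSpace.equiv (Fin 3) ℝ).symm.toContinuousLinearMap) v :=
    h.comp v (EuclideanSpace.equiv (Fin 3) ℝ).symm.hasFDerivAt
  rw [hF.fderiv, enorm3_eq_norm]
  congr 1
  ext j
  simp [EuclideanSpace.inner_single_right]

/-- gradient bound for the magnetic S-kernel. -/
theorem magnetic_S_kernel_gradient_bound (ω : V3) (hω : enorm3 ω = 1) (i : Fin 3) :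
    (∀ v : V3,
      DifferentiableAt ℝ (fun w => cross3 ω (vhat w) i / (1 + dot3 (vhat w) ω)) v) ∧
    (∀ v : V3,
      enorm3 (fun j =>
          fderiv ℝ (fun w => cross3 ω (vhat w) i / (1 + dot3 (vhat w) ω)) v (Pi.single j 1))
        ≤ 12 * Real.sqrt (1 + dot3 v v)) := by
  set c : EuclideanSpace ℝ (Fin 3) := toLp 2 (cross3 (Pi.single i 1) ω)
  have hω' : ‖toLp 2 ω‖ = 1 := by rwa [← enorm3_eq_norm]
  have hc : ‖c‖ ≤ 1 :=
    calc ‖c‖ = enorm3 (cross3 (Pi.single i 1) ω) := (enorm3_eq_norm _).symm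
      _ ≤ enorm3 ω := Real.sqrt_le_sqrt (dot3_cross3_single_self_le ω i)
      _ = 1 := hω
  have hcω : ⟪c, toLp 2 ω⟫ = 0 := by rw [← dot3_eq_inner, dot3_cross3_single_self]
  have hderiv (v : V3) : HasFDerivAt (magneticKernel c (toLp 2 ω))
      (innerSL ℝ (magneticKernelGrad c (toLp 2 ω) (toLp 2 v))) (toLp 2 v) :=
    hasFDerivAt_magneticKernel c _ (sqrt_one_add_norm_sq_add_inner_pos hω'.le _).ne'
  simp only [cross3_vhat_div_eq_magneticKernel]
  refine ⟨fun v => (hderiv v).differentiableAt.comp v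
    (EuclideanSpace.equiv (Fin 3) ℝ).symm.differentiableAt, fun v => ?_⟩
  rw [enorm3_fderiv_comp_toLp_eq_norm (hderiv v)]
  calc _ ≤ 6 * √(1 + ‖toLp 2 v‖ ^ 2) := norm_magneticKernelGrad_le_six_mul hc hω' hcω _
    _ ≤ 12 * √(1 + dot3 v v) := by
        rw [dot3_eq_inner, real_inner_self_eq_norm_sq]
        linarith [Real.sqrt_nonneg (1 + ‖toLp 2 v‖ ^ 2)]
end
end
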